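/- Let n ≥ 1, d ≥ 2 be integers. Then the subgroup d·Σ(n,d) = {d·a : a ∈ Σ(n,d)} of the sand dune group Σ(n,d) is isomorphic to Σ(n/gcd(n,d), d). -/

import Mathlib

open Polynomial Matrix

noncomputable section

/-- `Rq n` is the ring `ℤ[x]/(x^n - 1)`. -/
abbrev Rq (n : ℕ) : Type := Polynomial ℤ ⧸ Ideal.span ({X ^ n - 1} : Set (Polynomial ℤ))

/-- Projection `ℤ[x] → ℤ[x]/(x^n-1)`. -/
def mkR (n : ℕ) : Polynomial ℤ →ₐ[ℤ] Rq n := Ideal.Quotient.mkₐ ℤ _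

/-- Evaluation at 1, `ℤ[x]/(x^n-1) → ℤ`. -/
def evalOne (n : ℕ) : Rq n →ₐ[ℤ] ℤ :=
  Ideal.Quotient.liftₐ _ (aeval (1 : ℤ)) (by
    intro a ha
    have h : Ideal.span ({X ^ n - 1} : Set (Polynomial ℤ)) ≤
        RingHom.ker (aeval (1 : ℤ) : Polynomial ℤ →ₐ[ℤ] ℤ) := by
      rw [Ideal.span_le]
      rintro b ⟨rfl⟩
      simp [RingHom.mem_ker]
    exact h ha)

/-- `𝒵_n`, the ℤ-submodule of elements of `ℤ[x]/(x^n-1)` vanishing at 1. -/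
def Znd (n : ℕ) : Submodule ℤ (Rq n) := LinearMap.ker (evalOne n).toLinearMap

/-- `e_v = x^v - 1`. -/
def eR (n : ℕ) (v : ZMod n) : Rq n := mkR n (X ^ v.val - 1)

lemma eR_mem (n : ℕ) (v : ZMod n) : eR n v ∈ Znd n := by
  rw [Znd, LinearMap.mem_ker]
  change aeval (1 : ℤ) (X ^ v.val - 1 : Polynomial ℤ) = 0
  simp

/-- `e_v` as an element of `𝒵_n`. -/
def eZ (n : ℕ) (v : ZMod n) : Znd n := ⟨eR n v, eR_mem n v⟩

/-- `ε_v = d·e_v − e_{d·v}`. -/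
def epsR (n d : ℕ) (v : ZMod n) : Rq n := (d : ℤ) • eR n v - eR n ((d : ZMod n) * v)

/-- `ℰ_{n,d}`: the ℤ-submodule generated by the `ε_v`, `v ≠ 0`. -/
def Esub (n d : ℕ) : Submodule ℤ (Rq n) :=
  Submodule.span ℤ {x | ∃ v : ZMod n, v ≠ 0 ∧ x = epsR n d v}

/-- The sand dune group `Σ(n,d) = 𝒵_n / ℰ_{n,d}` of `DB(n,d)`. -/
abbrev SigmaGrp (n d : ℕ) : Type :=
  Znd n ⧸ (Esub n d).comap (Znd n).subtype

/-- Projection `𝒵_n → Σ(n,d)`. -/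
def sigmaMk (n d : ℕ) (a : Znd n) : SigmaGrp n d := Submodule.Quotient.mk a

/-- `f_v = d·x^v − x^{d·v}(1 + x + ⋯ + x^{d−1})`. -/
def fR (n d : ℕ) (v : ZMod n) : Rq n :=
  mkR n ((d : Polynomial ℤ) * X ^ v.val -
    X ^ (((d : ZMod n) * v).val) * (∑ i ∈ Finset.range d, X ^ i))

/-- The `R`-span of the `f_v`, `v ≠ 0`, where `R = ℤ[x]/(x^n-1)`. -/
def Fsub (n d : ℕ) : Submodule (Rq n) (Rq n) :=
  Submodule.span (Rq n) {x | ∃ v : ZMod n, v ≠ 0 ∧ x = fR n d v}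

/-- The sandpile (critical) group `S(n,d)` of the generalized de Bruijn graph `DB(n,d)`:
the quotient of `𝒵_n` by the `R`-span of the `f_v`, `v ≠ 0`. -/
abbrev SGrp (n d : ℕ) : Type :=
  Znd n ⧸ ((Fsub n d).restrictScalars ℤ).comap (Znd n).subtype

/-!
Substituting `x ↦ x^g`, where `g = gcd(n, d)` and `n = g n'`, embeds `ℤ[x]/(x^{n'} - 1)` into
`ℤ[x]/(x^n - 1)` and sends `e_w` to `e_{g w}` and `ε_w` to `ε_{g w}`, so it induces a map
`Σ(n', d) → Σ(n, d)`. Its image is spanned by the classes of the `e_{g k}`, while `d·Σ(n, d)` is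
spanned by the classes `d·e_v ≡ e_{d v}`; these agree because `d` and `g` generate the same
subgroup of `ℤ/n`. The map is injective: for `g ∤ v` the coefficient of `x^v` in `∑ c_u ε_u` is
`d c_v`, whereas it vanishes on the image of the substitution, so an element of `ℰ_{n,d}` in that
image only involves the `ε_{g w}`, which come from `ℰ_{n',d}`.
-/

namespace SandDune

lemma monic_X_pow_sub_one {R : Type*} [Ring R] (n : ℕ) [NeZero n] : (X ^ n - 1 : R[X]).Monic := by
  simpa using monic_X_pow_sub_C (1 : R) (NeZero.ne n)

lemma exists_natCast_mul_eq_gcd (n d : ℕ) [NeZero n] :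
    ∃ b : ℕ, ((d * b : ℕ) : ZMod n) = Nat.gcd n d := by
  refine ⟨(Nat.gcdB n d : ZMod n).val, ?_⟩
  have := congrArg (Int.cast : ℤ → ZMod n) (Nat.gcd_eq_gcd_ab n d)
  push_cast [ZMod.natCast_self] at this
  rw [Nat.cast_mul, ZMod.natCast_zmod_val, this, zero_mul, zero_add]

lemma range_natCast_mul_eq_range_natCast_gcd_mul (n d : ℕ) [NeZero n] :
    (Set.range fun i : ℕ => ((d * i : ℕ) : ZMod n)) =
      Set.range fun k : ℕ => ((Nat.gcd n d * k : ℕ) : ZMod n) := by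
  obtain ⟨m, hm⟩ := Nat.gcd_dvd_right n d
  obtain ⟨b, hb⟩ := exists_natCast_mul_eq_gcd n d
  refine subset_antisymm ?_ ?_
  · rintro _ ⟨i, rfl⟩
    exact ⟨m * i, by simp only [← mul_assoc, ← hm]⟩
  · rintro _ ⟨k, rfl⟩
    exact ⟨b * k, by push_cast at hb ⊢; rw [← mul_assoc, hb]⟩

lemma injective_natCast_mul_val {g n' n : ℕ} (h : g * n' = n) [NeZero n'] [NeZero n] :
    Function.Injective fun w : ZMod n' => ((g * w.val : ℕ) : ZMod n) := by
  intro w₁ w₂ hw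
  have hg : 0 < g := Nat.pos_of_ne_zero (left_ne_zero_of_mul (h ▸ NeZero.ne n))
  rw [ZMod.natCast_eq_natCast_iff', ← h, Nat.mul_mod_mul_left, Nat.mul_mod_mul_left,
    Nat.mod_eq_of_lt w₁.val_lt, Nat.mod_eq_of_lt w₂.val_lt] at hw
  exact ZMod.val_injective n' (Nat.eq_of_mul_eq_mul_left hg hw)

lemma mkR_X_pow_self (n : ℕ) : mkR n (X ^ n) = 1 := by
  rw [← sub_eq_zero, ← map_one (mkR n), ← map_sub]
  exact Ideal.Quotient.eq_zero_iff_mem.mpr (Ideal.subset_span rfl)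

lemma mkR_X_pow_mod (n i : ℕ) : mkR n (X ^ i) = mkR n (X ^ (i % n)) := by
  conv_lhs => rw [← Nat.div_add_mod i n, pow_add, pow_mul]
  rw [map_mul, map_pow, mkR_X_pow_self, one_pow, one_mul]

lemma evalOne_mkR (n : ℕ) (p : ℤ[X]) : evalOne n (mkR n p) = p.eval 1 := by
  change aeval (1 : ℤ) p = p.eval 1
  exact congrFun (coe_aeval_eq_eval 1) p

lemma eR_natCast (n i : ℕ) : eR n i = mkR n (X ^ i) - 1 := by
  rw [eR, map_sub, map_one, ZMod.val_natCast, ← mkR_X_pow_mod]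

lemma epsR_natCast (n d i : ℕ) :
    epsR n d i = (d : ℤ) • eR n i - eR n ((d * i : ℕ) : ZMod n) := by
  rw [epsR, Nat.cast_mul]

lemma epsR_mem_Esub (n d : ℕ) (v : ZMod n) : epsR n d v ∈ Esub n d := by
  by_cases hv : v = 0
  · simp [hv, epsR, eR]
  · exact Submodule.subset_span ⟨v, hv, rfl⟩

lemma Esub_eq_range_linearCombination (n d : ℕ) :
    Esub n d = LinearMap.range (Finsupp.linearCombination ℤ (epsR n d)) := by
  rw [Finsupp.range_linearCombination]
  refine le_antisymm (Submodule.span_mono ?_) (Submodule.span_le.mpr ?_)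
  · rintro x ⟨v, -, rfl⟩
    exact ⟨v, rfl⟩
  · rintro x ⟨v, rfl⟩
    exact epsR_mem_Esub n d v

lemma mkR_sub_eval_one_smul_mem_span (n : ℕ) (p : ℤ[X]) :
    mkR n p - p.eval 1 • 1 ∈ Submodule.span ℤ (Set.range fun i : ℕ => eR n i) := by
  induction p using Polynomial.induction_on' with
  | add p q hp hq =>
    simpa only [map_add, eval_add, add_smul, add_sub_add_comm] using Submodule.add_mem _ hp hq
  | monomial k c =>
    have : mkR n (monomial k c) - (monomial k c).eval 1 • 1 = c • eR n k := by
      rw [eR_natCast, ← C_mul_X_pow_eq_monomial, ← smul_eq_C_mul, map_smul, smul_sub]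
      simp
    rw [this]
    exact Submodule.smul_mem _ _ (Submodule.subset_span ⟨k, rfl⟩)

lemma span_range_eZ (n : ℕ) : Submodule.span ℤ (Set.range fun i : ℕ => eZ n i) = ⊤ := by
  refine eq_top_iff.mpr fun a _ => ?_
  obtain ⟨p, hp⟩ := Ideal.Quotient.mkₐ_surjective ℤ _ (a : Rq n)
  have hp1 : p.eval 1 = 0 := by
    rw [← evalOne_mkR]
    exact (congrArg (evalOne n) hp).trans a.2
  have hrange : (Set.range fun i : ℕ => eR n i) = (Znd n).subtype '' Set.range fun i : ℕ => eZ n i :=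
    Set.range_comp' (Znd n).subtype fun i : ℕ => eZ n i
  have ha := mkR_sub_eval_one_smul_mem_span n p
  rw [hp1, zero_smul, sub_zero, show mkR n p = a from hp, hrange, Submodule.span_image] at ha
  obtain ⟨b, hb, hba⟩ := ha
  rwa [← Subtype.ext hba]

lemma SigmaGrp.span_range_mk_eZ (n d : ℕ) :
    Submodule.span ℤ (Set.range fun i : ℕ => (Submodule.Quotient.mk (eZ n i) : SigmaGrp n d)) =
      ⊤ := by
  rw [← Submodule.range_mkQ, LinearMap.range_eq_map, ← span_range_eZ, Submodule.map_span,
    ← Set.range_comp]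
  rfl

lemma SigmaGrp.smul_mk_eZ (n d i : ℕ) :
    (d : ℤ) • (Submodule.Quotient.mk (eZ n i) : SigmaGrp n d) =
      Submodule.Quotient.mk (eZ n ((d * i : ℕ) : ZMod n)) := by
  rw [← Submodule.Quotient.mk_smul, Submodule.Quotient.eq]
  change (d : ℤ) • eR n i - eR n ((d * i : ℕ) : ZMod n) ∈ Esub n d
  rw [← epsR_natCast]
  exact epsR_mem_Esub n d i

lemma SigmaGrp.range_smul_id (n d : ℕ) :
    LinearMap.range ((d : ℤ) • (LinearMap.id : SigmaGrp n d →ₗ[ℤ] SigmaGrp n d)) =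
      Submodule.span ℤ ((fun v => Submodule.Quotient.mk (eZ n v)) ''
        Set.range fun i : ℕ => ((d * i : ℕ) : ZMod n)) := by
  rw [LinearMap.range_eq_map, ← SigmaGrp.span_range_mk_eZ, Submodule.map_span, ← Set.range_comp,
    ← Set.range_comp]
  exact congrArg _ (congrArg _ (funext (SigmaGrp.smul_mk_eZ n d)))

def monomialBasis (n : ℕ) [NeZero n] : Module.Basis (ZMod n) ℤ (Rq n) :=
  (AdjoinRoot.powerBasis' (monic_X_pow_sub_one n)).basis.reindex
    ((finCongr (by simpa using natDegree_X_pow_sub_C (r := (1 : ℤ)))).trans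
      (ZMod.finEquiv n).toEquiv)

section MonomialBasis

variable {n : ℕ} [NeZero n]

lemma monomialBasis_apply (v : ZMod n) : monomialBasis n v = mkR n (X ^ v.val) := by
  unfold monomialBasis
  erw [Module.Basis.reindex_apply, PowerBasis.basis_eq_pow]
  obtain ⟨k, rfl⟩ : ∃ k, n = k + 1 := Nat.exists_eq_succ_of_ne_zero (NeZero.ne n)
  rfl

lemma mkR_X_pow_eq_monomialBasis (i : ℕ) : mkR n (X ^ i) = monomialBasis n i := by
  rw [monomialBasis_apply, ZMod.val_natCast, ← mkR_X_pow_mod]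

lemma eR_eq_monomialBasis_sub (v : ZMod n) :
    eR n v = monomialBasis n v - monomialBasis n 0 := by
  rw [eR, map_sub, monomialBasis_apply, monomialBasis_apply, ZMod.val_zero, pow_zero]

lemma monomialBasis_repr_epsR_of_not_dvd {d : ℕ} {v : ZMod n} (hv : ¬ (d : ZMod n) ∣ v)
    (u : ZMod n) : (monomialBasis n).repr (epsR n d u) v = if u = v then (d : ℤ) else 0 := by
  have hv0 : (0 : ZMod n) ≠ v := fun h => hv (h ▸ dvd_zero _)
  have hdu : (d : ZMod n) * u ≠ v := fun h => hv (h ▸ dvd_mul_right _ _)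
  simp only [epsR, eR_eq_monomialBasis_sub, map_sub, map_zsmul, Module.Basis.repr_self,
    Finsupp.sub_apply, Finsupp.smul_apply, Finsupp.single_apply, hv0, hdu, if_false, sub_zero,
    smul_eq_mul, mul_ite, mul_one, mul_zero]

end MonomialBasis

section Expand

variable {g n' n : ℕ} (h : g * n' = n)

def expandR : Rq n' →ₐ[ℤ] Rq n :=
  Ideal.quotientMapₐ _ (expand ℤ g) <| Ideal.span_le.mpr <| by
    rintro _ rfl
    rw [SetLike.mem_coe, Ideal.mem_comap, map_sub, map_pow, expand_X, map_one, ← pow_mul, h]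
    exact Ideal.mem_span_singleton_self _

lemma expandR_mkR (p : ℤ[X]) : expandR h (mkR n' p) = mkR n (expand ℤ g p) := rfl

lemma expandR_mkR_X_pow (i : ℕ) : expandR h (mkR n' (X ^ i)) = mkR n (X ^ (g * i)) := by
  rw [expandR_mkR, map_pow, expand_X, pow_mul]

lemma evalOne_expandR (z : Rq n') : evalOne n (expandR h z) = evalOne n' z := by
  obtain ⟨p, rfl⟩ := Ideal.Quotient.mkₐ_surjective ℤ _ z
  rw [← mkR, expandR_mkR, evalOne_mkR, evalOne_mkR, expand_eval, one_pow]

lemma expandR_mem_Znd {z : Rq n'} (hz : z ∈ Znd n') : expandR h z ∈ Znd n := by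
  simpa [Znd, evalOne_expandR] using hz

lemma expandR_eR_natCast (i : ℕ) : expandR h (eR n' i) = eR n (g * i : ℕ) := by
  rw [eR_natCast, eR_natCast, map_sub, map_one, expandR_mkR_X_pow]

lemma expandR_epsR_natCast (d i : ℕ) : expandR h (epsR n' d i) = epsR n d (g * i : ℕ) := by
  rw [epsR_natCast, epsR_natCast, map_sub, map_zsmul, expandR_eR_natCast, expandR_eR_natCast,
    mul_left_comm]

variable [NeZero n']

lemma expandR_mem_Esub {d : ℕ} {z : Rq n'} (hz : z ∈ Esub n' d) : expandR h z ∈ Esub n d := by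
  suffices Esub n' d ≤ (Esub n d).comap (expandR h).toLinearMap from this hz
  refine Submodule.span_le.mpr ?_
  rintro _ ⟨w, -, rfl⟩
  rw [SetLike.mem_coe, Submodule.mem_comap, AlgHom.toLinearMap_apply, ← ZMod.natCast_zmod_val w,
    expandR_epsR_natCast]
  exact epsR_mem_Esub _ _ _

def expandSigma (d : ℕ) : SigmaGrp n' d →ₗ[ℤ] SigmaGrp n d :=
  Submodule.mapQ _ _ ((expandR h).toLinearMap.restrict fun _ hz => expandR_mem_Znd h hz)
    fun _ hz => expandR_mem_Esub h hz

lemma expandSigma_mk_eZ (d i : ℕ) :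
    expandSigma h d (Submodule.Quotient.mk (eZ n' i)) =
      Submodule.Quotient.mk (eZ n ((g * i : ℕ) : ZMod n)) :=
  congrArg Submodule.Quotient.mk (Subtype.ext (expandR_eR_natCast h i))

lemma range_expandSigma (d : ℕ) :
    LinearMap.range (expandSigma h d) =
      Submodule.span ℤ ((fun v => Submodule.Quotient.mk (eZ n v)) ''
        Set.range fun k : ℕ => ((g * k : ℕ) : ZMod n)) := by
  rw [LinearMap.range_eq_map, ← SigmaGrp.span_range_mk_eZ, Submodule.map_span, ← Set.range_comp,
    ← Set.range_comp]
  exact congrArg _ (congrArg _ (funext (expandSigma_mk_eZ h d)))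

variable [NeZero n]

lemma expandR_monomialBasis (w : ZMod n') :
    expandR h (monomialBasis n' w) = monomialBasis n (g * w.val : ℕ) := by
  rw [monomialBasis_apply, expandR_mkR_X_pow, mkR_X_pow_eq_monomialBasis]

lemma expandR_injective : Function.Injective (expandR h) := by
  refine LinearMap.injective_of_linearIndependent (f := (expandR h).toLinearMap)
    (monomialBasis n').span_eq ?_
  have : (expandR h).toLinearMap ∘ monomialBasis n' =
      monomialBasis n ∘ fun w : ZMod n' => ((g * w.val : ℕ) : ZMod n) :=
    funext (expandR_monomialBasis h)
  rw [this]
  exact (monomialBasis n).linearIndependent.comp _ (injective_natCast_mul_val h)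

lemma monomialBasis_repr_expandR_of_not_dvd {v : ZMod n} (hv : ¬ (g : ZMod n) ∣ v)
    (z : Rq n') : (monomialBasis n).repr (expandR h z) v = 0 := by
  suffices (monomialBasis n).coord v ∘ₗ (expandR h).toLinearMap = 0 from
    LinearMap.congr_fun this z
  refine (monomialBasis n').ext fun w => ?_
  rw [LinearMap.comp_apply, AlgHom.toLinearMap_apply, expandR_monomialBasis,
    Module.Basis.coord_apply, Module.Basis.repr_self, LinearMap.zero_apply,
    Finsupp.single_eq_of_ne]
  rintro rfl
  exact hv (by rw [Nat.cast_mul]; exact dvd_mul_right _ _)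

lemma mem_Esub_of_expandR_mem {d : ℕ} (hd : d ≠ 0) (hgd : g ∣ d) {z : Rq n'}
    (hz : expandR h z ∈ Esub n d) : z ∈ Esub n' d := by
  rw [Esub_eq_range_linearCombination] at hz
  obtain ⟨c, hc⟩ := hz
  have hc_dvd : ∀ v ∈ c.support, (g : ZMod n) ∣ v := by
    intro v hv
    by_contra hgv
    have hdv : ¬ (d : ZMod n) ∣ v := fun hdv => hgv ((Nat.cast_dvd_cast hgd).trans hdv)
    have hcoord := congrArg ((monomialBasis n).coord v) hc
    have hcoord_epsR : (fun u => (monomialBasis n).coord v (epsR n d u)) =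
        fun u => if u = v then (d : ℤ) else 0 :=
      funext (monomialBasis_repr_epsR_of_not_dvd hdv)
    rw [Finsupp.apply_linearCombination, Module.Basis.coord_apply,
      monomialBasis_repr_expandR_of_not_dvd h hgv, Function.comp_def, hcoord_epsR,
      Finsupp.linearCombination_apply] at hcoord
    simp only [smul_eq_mul, mul_ite, mul_zero, Finsupp.sum_ite_eq', if_pos hv] at hcoord
    exact mul_ne_zero (Finsupp.mem_support_iff.mp hv) (Int.natCast_ne_zero.mpr hd) hcoord
  have hmem : expandR h z ∈ (Esub n' d).map (expandR h).toLinearMap := by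
    rw [← hc, Finsupp.linearCombination_apply]
    refine Submodule.sum_mem _ fun v hv => Submodule.smul_mem _ _ ?_
    obtain ⟨t, rfl⟩ := hc_dvd v hv
    refine ⟨epsR n' d t.val, epsR_mem_Esub _ _ _, ?_⟩
    rw [AlgHom.toLinearMap_apply, expandR_epsR_natCast, Nat.cast_mul, ZMod.natCast_zmod_val]
  obtain ⟨y, hy, hyz⟩ := hmem
  exact expandR_injective h hyz ▸ hy

lemma expandSigma_injective {d : ℕ} (hd : d ≠ 0) (hgd : g ∣ d) :
    Function.Injective (expandSigma h d) := by
  refine (injective_iff_map_eq_zero _).mpr fun x hx => ?_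
  induction x using Submodule.Quotient.induction_on with | _ z => ?_
  exact (Submodule.Quotient.mk_eq_zero _).mpr (mem_Esub_of_expandR_mem h hd hgd
    ((Submodule.Quotient.mk_eq_zero ((Esub n d).comap (Znd n).subtype)).mp hx))

end Expand

end SandDune

open SandDune

/-- Theorem: `d·Σ(n,d) ≅ Σ(n/gcd(n,d), d)`. -/
theorem smul_sand_dune (n d : ℕ) (hn : 1 ≤ n) (hd : 2 ≤ d) :
    Nonempty
      ((LinearMap.range ((d : ℤ) • (LinearMap.id : SigmaGrp n d →ₗ[ℤ] SigmaGrp n d))) ≃+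
        SigmaGrp (n / Nat.gcd n d) d) := by
  have hgn : Nat.gcd n d * (n / Nat.gcd n d) = n := Nat.mul_div_cancel' (Nat.gcd_dvd_left n d)
  have : NeZero n := ⟨by omega⟩
  have : NeZero (n / Nat.gcd n d) := ⟨right_ne_zero_of_mul (hgn ▸ NeZero.ne n)⟩
  have hinj := expandSigma_injective hgn (by omega : d ≠ 0) (Nat.gcd_dvd_right n d)
  have hrange : LinearMap.range (expandSigma hgn d) =
      LinearMap.range ((d : ℤ) • (LinearMap.id : SigmaGrp n d →ₗ[ℤ] SigmaGrp n d)) := by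
    rw [range_expandSigma, SigmaGrp.range_smul_id, range_natCast_mul_eq_range_natCast_gcd_mul n d]
  exact ⟨((LinearEquiv.ofInjective _ hinj).trans (LinearEquiv.ofEq _ _ hrange)).symm.toAddEquiv⟩

end
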